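/- arXiv:1812.04543 — 2 statements merged into one kernel-verified Lean document; each statement's English description precedes it below -/
import Mathlib

section
/- If G is a 2-connected graph and {u,v} is a 2-vertex cut of G, then every cut component C of {u,v} contains a path from a neighbor of u to a neighbor of v, and the graph obtained from C together with u, v and a new edge (u,v) is 2-connected. -/
open SimpleGraph

lemma walk_induce_reachable {V : Type*} {G : SimpleGraph V} (S : Set V) :
    ∀ {a b : V} (p : G.Walk a b), (∀ z ∈ p.support, z ∈ S) →
    ∀ (ha : a ∈ S) (hb : b ∈ S), (G.induce S).Reachable ⟨a, ha⟩ ⟨b, hb⟩ := by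
  intro a b p
  induction p with
  | nil => exact fun _ _ _ => Reachable.refl _
  | @cons a b t h p ih =>
    intro hsup ha hb
    have hbm : b ∈ S := hsup b (by simp)
    exact (Adj.reachable (by simpa using h :
        (G.induce S).Adj ⟨_, ha⟩ ⟨_, hbm⟩)).trans
      (ih (fun z hz => hsup z (by simp [hz])) hbm hb)

lemma trunc_walk {V : Type*} {G : SimpleGraph V} (u v : V) :
    ∀ {a t : V} (p : G.Walk a t), a ∉ ({u, v} : Set V) → t ∈ ({u, v} : Set V) →
    ∃ t' ∈ ({u, v} : Set V), ∃ q : G.Walk a t',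
      (∀ z ∈ q.support, z ∈ p.support) ∧
      (∀ z ∈ q.support, z ≠ t' → z ∉ ({u, v} : Set V) ∧
        ∃ r : G.Walk a z, ∀ y ∈ r.support, y ∈ q.support ∧ y ≠ t') ∧
      ∃ z, G.Adj z t' ∧ z ∈ q.support ∧ z ≠ t' := by
  intro a t p
  induction p with
  | nil => exact fun ha ht => absurd ht ha
  | @cons a b t h p ih =>
    intro ha ht
    by_cases hb : b ∈ ({u, v} : Set V)
    · refine ⟨b, hb, Walk.cons h Walk.nil, ?_, ?_, a, h, by simp, fun hab => ha (hab ▸ hb)⟩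
      · intro z hz
        simp only [Walk.support_cons, Walk.support_nil, List.mem_cons,
          List.not_mem_nil, or_false] at hz
        simp only [Walk.support_cons, List.mem_cons]
        rcases hz with rfl | rfl
        · exact Or.inl rfl
        · exact Or.inr p.start_mem_support
      · intro z hz hzb
        simp only [Walk.support_cons, Walk.support_nil, List.mem_cons,
          List.not_mem_nil, or_false] at hz
        rcases hz with rfl | rfl
        · refine ⟨ha, Walk.nil, ?_⟩
          intro y hy
          simp only [Walk.support_nil, List.mem_cons, List.not_mem_nil, or_false] at hy
          subst hy
          exact ⟨by simp, fun hh => ha (hh ▸ hb)⟩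
        · exact absurd rfl hzb
    · obtain ⟨t', ht', q', hsub, hmid, z, hz1, hz2, hz3⟩ := ih hb ht
      have hat' : a ≠ t' := fun hh => ha (hh ▸ ht')
      refine ⟨t', ht', Walk.cons h q', ?_, ?_, z, hz1, by simp [hz2], hz3⟩
      · intro y hy
        simp only [Walk.support_cons, List.mem_cons] at hy ⊢
        rcases hy with rfl | hy
        · exact Or.inl rfl
        · exact Or.inr (hsub y hy)
      · intro y hy hyt
        simp only [Walk.support_cons, List.mem_cons] at hy
        rcases hy with rfl | hy
        · exact ⟨ha, Walk.nil, by simp [hat']⟩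
        · obtain ⟨hy1, r, hr⟩ := hmid y hy hyt
          refine ⟨hy1, Walk.cons h r, ?_⟩
          intro w hw
          simp only [Walk.support_cons, List.mem_cons] at hw ⊢
          rcases hw with rfl | hw
          · exact ⟨Or.inl rfl, hat'⟩
          · exact ⟨Or.inr (hr w hw).1, (hr w hw).2⟩

/-- A graph is 2-connected: connected and no cut vertex. -/
def TwoConnected {V : Type*} (G : SimpleGraph V) : Prop :=
  G.Connected ∧ ∀ v : V, (G.induce {x : V | x ≠ v}).Connected

lemma keyC {V : Type*} {G : SimpleGraph V} (hG : TwoConnected G) (u v : V) (huv : u ≠ v)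
    (c : (G.induce {x : V | x ≠ u ∧ x ≠ v}).ConnectedComponent)
    {w : {x : V | x ≠ u ∧ x ≠ v}} (hw : w ∈ c.supp) (x : V) (hx : x ≠ w.val) :
    ∃ t', ∃ _ : t' ∈ ({u, v} : Set V), t' ≠ x ∧ ∃ q : G.Walk w.val t',
      (∀ z ∈ q.support, z ≠ x) ∧
      (∀ z ∈ q.support, z = t' ∨ z ∈ Subtype.val '' c.supp) ∧
      ∃ z ∈ Subtype.val '' c.supp, G.Adj z t' := by
  classical
  -- choose a target t0 ∈ {u,v} with t0 ≠ x
  obtain ⟨t0, ht0, ht0x⟩ : ∃ t0, t0 ∈ ({u, v} : Set V) ∧ t0 ≠ x := by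
    rcases eq_or_ne x u with rfl | hxu
    · exact ⟨v, by simp, fun h => huv h.symm⟩
    · exact ⟨u, by simp, hxu.symm⟩
  -- walk from w to t0 in G - x
  have hconn := (hG.2 x).preconnected ⟨w.val, hx.symm⟩ ⟨t0, ht0x⟩
  obtain ⟨p'⟩ := hconn
  let p : G.Walk w.val t0 := p'.map (SimpleGraph.Embedding.induce _).toHom
  have hpx : ∀ z ∈ p.support, z ≠ x := by
    intro z hz
    rw [show p.support = p'.support.map (SimpleGraph.Embedding.induce _).toHom from Walk.support_map _ _, List.mem_map] at hz
    obtain ⟨y, _, rfl⟩ := hz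
    exact y.prop
  have hwuv : w.val ∉ ({u, v} : Set V) := by
    intro hmem
    rcases hmem with h1 | h1
    · exact w.prop.1 h1
    · exact w.prop.2 h1
  obtain ⟨t', ht', q, hsub, hmid, z, hadj, hzq, hzt⟩ := trunc_walk u v p hwuv ht0
  have ht'x : t' ≠ x := hpx t' (hsub t' q.end_mem_support)
  -- membership of non-t' support vertices in the component
  have hmemc : ∀ z ∈ q.support, z ≠ t' → z ∈ Subtype.val '' c.supp := by
    intro z' hz' hz't
    obtain ⟨hz'uv, r, hr⟩ := hmid z' hz' hz't
    have hrS : ∀ y ∈ r.support, y ∈ {x : V | x ≠ u ∧ x ≠ v} := by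
      intro y hy
      obtain ⟨hy1, hy2⟩ := hr y hy
      have := (hmid y hy1 hy2).1
      exact ⟨fun hh => this (by simp [hh]), fun hh => this (by simp [hh])⟩
    have hz'S : z' ∈ {x : V | x ≠ u ∧ x ≠ v} :=
      ⟨fun hh => hz'uv (by simp [hh]), fun hh => hz'uv (by simp [hh])⟩
    have hwS : w.val ∈ {x : V | x ≠ u ∧ x ≠ v} := w.prop
    have hreach := walk_induce_reachable _ r hrS hwS hz'S
    refine ⟨⟨z', hz'S⟩, ?_, rfl⟩
    rw [ConnectedComponent.mem_supp_iff]
    have hwc : (G.induce {x : V | x ≠ u ∧ x ≠ v}).connectedComponentMk ⟨w.val, hwS⟩ = c := by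
      rw [← (ConnectedComponent.mem_supp_iff c w).mp hw]
    rw [← hwc]
    exact (ConnectedComponent.sound hreach).symm
  refine ⟨t', ht', ht'x, q, ?_, ?_, z, hmemc z hzq hzt, hadj⟩
  · exact fun z' hz' => hpx z' (hsub z' hz')
  · intro z' hz'
    rcases eq_or_ne z' t' with rfl | hne
    · exact Or.inl rfl
    · exact Or.inr (hmemc z' hz' hne)

lemma induce_induce_connected {V : Type*} (G : SimpleGraph V) (S : Set V) (z : ↥S)
    (h : (G.induce {y | y ∈ S ∧ y ≠ ↑z}).Connected) :
    ((G.induce S).induce {x : ↥S | x ≠ z}).Connected := by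
  let e : G.induce {y | y ∈ S ∧ y ≠ ↑z} ≃g (G.induce S).induce {x : ↥S | x ≠ z} :=
    { toFun := fun y => ⟨⟨y.val, y.prop.1⟩, fun hh => y.prop.2 (congrArg Subtype.val hh)⟩
      invFun := fun y => ⟨y.val.val, y.val.prop, fun hh => y.prop (Subtype.ext hh)⟩
      left_inv := fun y => rfl
      right_inv := fun y => rfl
      map_rel_iff' := Iff.rfl }
  exact e.connected_iff.mp h

theorem stmt0 {V : Type*} [Fintype V] [DecidableEq V] (G : SimpleGraph V)
    (hG : TwoConnected G) (u v : V) (huv : u ≠ v)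
    (hcut : ¬ (G.induce {x : V | x ≠ u ∧ x ≠ v}).Connected)
    (c : (G.induce {x : V | x ≠ u ∧ x ≠ v}).ConnectedComponent) :
    (∃ a ∈ c.supp, ∃ b ∈ c.supp,
        G.Adj u a.val ∧ G.Adj v b.val ∧
        (G.induce {x : V | x ≠ u ∧ x ≠ v}).Reachable a b) ∧
      TwoConnected ((G ⊔ fromEdgeSet {s(u, v)}).induce
        ({u, v} ∪ (Subtype.val '' c.supp))) := by
  classical
  obtain ⟨w0, hw0⟩ := c.exists_rep
  have hw0m : w0 ∈ c.supp := (ConnectedComponent.mem_supp_iff c w0).mpr hw0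
  obtain ⟨t1, ht1, ht1v, q1, _, _, z1, hz1c, hz1adj⟩ :=
    keyC hG u v huv c hw0m v (Ne.symm w0.prop.2)
  have ht1u : t1 = u := by
    rcases ht1 with rfl | rfl
    · rfl
    · exact absurd rfl ht1v
  rw [ht1u] at hz1adj
  obtain ⟨t2, ht2, ht2u, q2, _, _, z2, hz2c, hz2adj⟩ :=
    keyC hG u v huv c hw0m u (Ne.symm w0.prop.1)
  have ht2v : t2 = v := by
    rcases ht2 with rfl | rfl
    · exact absurd rfl ht2u
    · rfl
  rw [ht2v] at hz2adj
  obtain ⟨a, ha, rfl⟩ := hz1c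
  obtain ⟨b, hb, rfl⟩ := hz2c
  set G' : SimpleGraph V := G ⊔ fromEdgeSet {s(u, v)} with hG'
  set T : Set V := {u, v} ∪ (Subtype.val '' c.supp) with hT
  have hG'uv : G'.Adj u v := by
    rw [hG', sup_adj, fromEdgeSet_adj]
    exact Or.inr ⟨rfl, huv⟩
  have hcS : ∀ y ∈ Subtype.val '' c.supp, y ≠ u ∧ y ≠ v := by
    rintro y ⟨s, _, rfl⟩
    exact s.prop
  have huT : u ∈ T := Or.inl (by simp)
  have hvT : v ∈ T := Or.inl (by simp)
  -- every vertex of the component reaches u or v inside any big enough induced subgraph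
  have reachD : ∀ (x : V) (A : Set V) (hA : ∀ y, y ∈ T → y ≠ x → y ∈ A),
      ∀ w (hwc : w ∈ Subtype.val '' c.supp) (hwx : w ≠ x),
      (∃ (h2 : u ≠ x), (G'.induce A).Reachable ⟨w, hA w (Or.inr hwc) hwx⟩ ⟨u, hA u huT h2⟩) ∨
      (∃ (h2 : v ≠ x), (G'.induce A).Reachable ⟨w, hA w (Or.inr hwc) hwx⟩ ⟨v, hA v hvT h2⟩) := by
    intro x A hA w hwc hwx
    obtain ⟨ws, hws, rfl⟩ := hwc
    obtain ⟨t', ht1', ht2', q, hqx, hqm, _⟩ := keyC hG u v huv c hws x (Ne.symm hwx)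
    have hsupp : (q.mapLe (le_sup_left : G ≤ G')).support = q.support := by
      have hid : ⇑(Hom.ofLE (le_sup_left : G ≤ G')) = id := rfl
      simp [Walk.mapLe, Walk.support_map, hid]
    have ht'A : t' ∈ A := hA t' (Or.inl ht1') ht2'
    have hwsA : (ws : V) ∈ A := hA _ (Or.inr ⟨ws, hws, rfl⟩) hwx
    have hq' : ∀ zz ∈ (q.mapLe (le_sup_left : G ≤ G')).support, zz ∈ A := by
      intro zz hz
      rw [hsupp] at hz
      apply hA
      · rcases hqm zz hz with rfl | hzz
        · exact Or.inl ht1'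
        · exact Or.inr hzz
      · exact hqx zz hz
    have hr : (G'.induce A).Reachable ⟨(ws : V), hwsA⟩ ⟨t', ht'A⟩ :=
      walk_induce_reachable A (q.mapLe le_sup_left) hq' _ _
    rcases ht1' with h | h
    · subst h
      exact Or.inl ⟨ht2', hr⟩
    · rw [Set.mem_singleton_iff] at h
      subst h
      exact Or.inr ⟨ht2', hr⟩
  have connFromBase : ∀ (A : Set V) (base : V) (hb : base ∈ A),
      (∀ a : ↥A, (G'.induce A).Reachable a ⟨base, hb⟩) → (G'.induce A).Connected := by
    intro A base hb h
    rw [connected_iff]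
    exact ⟨fun a b => (h a).trans (h b).symm, ⟨⟨base, hb⟩⟩⟩
  have edgeAdj : ∀ (A : Set V) (hu : u ∈ A) (hv : v ∈ A),
      (G'.induce A).Adj ⟨u, hu⟩ ⟨v, hv⟩ := fun A hu hv => hG'uv
  refine ⟨⟨a, ha, b, hb, hz1adj.symm, hz2adj.symm, ?_⟩, ?_, ?_⟩
  · -- reachability of the two neighbours inside the component
    apply ConnectedComponent.exact
    rw [(ConnectedComponent.mem_supp_iff c a).mp ha, (ConnectedComponent.mem_supp_iff c b).mp hb]
  · -- connectivity of the augmented graph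
    apply connFromBase T u huT
    intro p
    have hp := p.prop
    simp only [hT, Set.mem_union, Set.mem_insert_iff, Set.mem_singleton_iff] at hp
    rcases hp with (hp | hp) | hp
    · exact (Subtype.ext hp : p = ⟨u, huT⟩) ▸ Reachable.refl _
    · have : p = ⟨v, hvT⟩ := Subtype.ext hp
      rw [this]
      exact (edgeAdj T huT hvT).symm.reachable
    · rcases reachD u T (fun y hy _ => hy) p.val hp (hcS p.val hp).1 with ⟨h2, r⟩ | ⟨h2, r⟩
      · exact absurd rfl h2
      · exact r.trans (edgeAdj T huT hvT).symm.reachable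
  · -- no cut vertices in the augmented graph
    intro z
    apply induce_induce_connected G' T z
    have hxT := z.prop
    simp only [hT, Set.mem_union, Set.mem_insert_iff, Set.mem_singleton_iff] at hxT
    rcases hxT with (hxu | hxv) | hxc
    · -- removing u : base v
      have hvA : v ∈ {y | y ∈ T ∧ y ≠ (z : V)} := ⟨hvT, fun hh => huv (hxu ▸ hh).symm⟩
      apply connFromBase _ v hvA
      intro p
      obtain ⟨hpT, hpx⟩ := p.prop
      simp only [hT, Set.mem_union, Set.mem_insert_iff, Set.mem_singleton_iff] at hpT
      rcases hpT with (hp | hp) | hp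
      · exact absurd (hp.trans hxu.symm) hpx
      · exact (Subtype.ext hp : p = ⟨v, hvA⟩) ▸ Reachable.refl _
      · rcases reachD (z : V) {y | y ∈ T ∧ y ≠ (z : V)} (fun y hy hyx => ⟨hy, hyx⟩)
            p.val hp hpx with ⟨h2, r⟩ | ⟨h2, r⟩
        · exact absurd hxu.symm h2
        · exact r
    · -- removing v : base u
      have huA : u ∈ {y | y ∈ T ∧ y ≠ (z : V)} := ⟨huT, fun hh => huv (hh.trans hxv)⟩
      apply connFromBase _ u huA
      intro p
      obtain ⟨hpT, hpx⟩ := p.prop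
      simp only [hT, Set.mem_union, Set.mem_insert_iff, Set.mem_singleton_iff] at hpT
      rcases hpT with (hp | hp) | hp
      · exact (Subtype.ext hp : p = ⟨u, huA⟩) ▸ Reachable.refl _
      · exact absurd (hp.trans hxv.symm) hpx
      · rcases reachD (z : V) {y | y ∈ T ∧ y ≠ (z : V)} (fun y hy hyx => ⟨hy, hyx⟩)
            p.val hp hpx with ⟨h2, r⟩ | ⟨h2, r⟩
        · exact r
        · exact absurd hxv.symm h2
    · -- removing a component vertex : base u, with the extra edge joining u and v
      have hxu : (z : V) ≠ u := (hcS _ hxc).1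
      have hxv : (z : V) ≠ v := (hcS _ hxc).2
      have huA : u ∈ {y | y ∈ T ∧ y ≠ (z : V)} := ⟨huT, Ne.symm hxu⟩
      have hvA : v ∈ {y | y ∈ T ∧ y ≠ (z : V)} := ⟨hvT, Ne.symm hxv⟩
      apply connFromBase _ u huA
      intro p
      obtain ⟨hpT, hpx⟩ := p.prop
      simp only [hT, Set.mem_union, Set.mem_insert_iff, Set.mem_singleton_iff] at hpT
      rcases hpT with (hp | hp) | hp
      · exact (Subtype.ext hp : p = ⟨u, huA⟩) ▸ Reachable.refl _
      · exact (Subtype.ext hp : p = ⟨v, hvA⟩) ▸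
          (Adj.reachable (hG'uv.symm : (G'.induce _).Adj ⟨v, hvA⟩ ⟨u, huA⟩))
      · rcases reachD (z : V) {y | y ∈ T ∧ y ≠ (z : V)} (fun y hy hyx => ⟨hy, hyx⟩)
            p.val hp hpx with ⟨h2, r⟩ | ⟨h2, r⟩
        · exact r
        · exact r.trans (Adj.reachable
            (hG'uv.symm : (G'.induce {y | y ∈ T ∧ y ≠ (z : V)}).Adj ⟨v, hvA⟩ ⟨u, huA⟩))
end

section
/- Let P1, …, Pk be closed walks in a graph such that consecutive walks Pᵢ and Pᵢ₊₁ share exactly one vertex xᵢ₊₁ and are otherwise vertex disjoint, each Pᵢ visits every vertex of its block Bᵢ at least once and at most twice, and each Pᵢ visits xᵢ and xᵢ₊₁ exactly once. Then the union of the edge multisets of P1, …, Pk forms a closed walk of B₁ ∪ … ∪ Bₖ that visits every vertex at least once and at most twice, and visits each shared vertex xᵢ (2 ≤ i ≤ k) exactly twice. -/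
open SimpleGraph

theorem stmt8 {V : Type*} [Fintype V] [DecidableEq V] (G : SimpleGraph V)
    (n : ℕ) (hn : 1 ≤ n) (B : ℕ → Set V) (x : ℕ → V)
    (P : ∀ i : Fin n, G.Walk (x (i : ℕ)) (x (i : ℕ)))
    (hxB : ∀ i : Fin n, x (i : ℕ) ∈ B (i : ℕ) ∧ x ((i : ℕ) + 1) ∈ B (i : ℕ))
    (hchain : ∀ i j : ℕ, i < j → j < n →
      (j = i + 1 → B i ∩ B j = {x j}) ∧ (i + 1 < j → B i ∩ B j = ∅))
    (hxinj : ∀ i j : ℕ, i ≤ n → j ≤ n → x i = x j → i = j)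
    (hPsupp : ∀ i : Fin n, {v : V | v ∈ (P i).support} ⊆ B (i : ℕ))
    (hPall : ∀ i : Fin n, ∀ v ∈ B (i : ℕ),
      1 ≤ (P i).support.tail.count v ∧ (P i).support.tail.count v ≤ 2)
    (hPx : ∀ i : Fin n, (P i).support.tail.count (x (i : ℕ)) = 1 ∧
      (P i).support.tail.count (x ((i : ℕ) + 1)) = 1) :
    ∃ W : G.Walk (x 0) (x 0),
      (W.edges : Multiset (Sym2 V)) = ∑ i : Fin n, ((P i).edges : Multiset (Sym2 V)) ∧
      (∀ v ∈ ⋃ i ∈ Finset.range n, B i,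
        1 ≤ W.support.tail.count v ∧ W.support.tail.count v ≤ 2) ∧
      (∀ i : ℕ, 1 ≤ i → i < n → W.support.tail.count (x i) = 2) := by
  classical
  set E : ℕ → Multiset (Sym2 V) :=
    fun i => if h : i < n then ((P ⟨i, h⟩).edges : Multiset (Sym2 V)) else 0 with hE
  -- Key vertex-separation fact: a vertex of B i and B j with i < j < n is x j (if j = i+1)
  have hsep : ∀ i j : ℕ, i < j → j < n → ∀ v, v ∈ B i → v ∈ B j → v = x j := by
    intro i j hij hjn v hvi hvj
    rcases Nat.lt_or_ge (i + 1) j with h | h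
    · exfalso
      have := (hchain i j hij hjn).2 h
      have : v ∈ (∅ : Set V) := this ▸ Set.mem_inter hvi hvj
      exact this
    · have hj : j = i + 1 := le_antisymm h hij
      have := (hchain i j hij hjn).1 hj
      have hv : v ∈ ({x j} : Set V) := this ▸ Set.mem_inter hvi hvj
      exact hv
  have key : ∀ m, 1 ≤ m → m ≤ n → ∃ W : G.Walk (x 0) (x 0),
      (W.edges : Multiset (Sym2 V)) = ∑ i ∈ Finset.range m, E i ∧
      (∀ v ∈ W.support, ∃ i < m, v ∈ B i) ∧
      (∀ v : V, (∃ i < m, v ∈ B i) →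
        1 ≤ W.support.tail.count v ∧ W.support.tail.count v ≤ 2) ∧
      (∀ i : ℕ, 1 ≤ i → i < m → W.support.tail.count (x i) = 2) ∧
      W.support.tail.count (x m) = 1 := by
    intro m hm
    induction m, hm using Nat.le_induction with
    | base =>
      intro h1n
      have h0 : (0 : ℕ) < n := h1n
      refine ⟨P ⟨0, h0⟩, ?_, ?_, ?_, ?_, ?_⟩
      · simp [hE, h0]
      · intro v hv
        exact ⟨0, Nat.one_pos, hPsupp ⟨0, h0⟩ hv⟩
      · rintro v ⟨i, hi, hvB⟩
        interval_cases i
        exact hPall ⟨0, h0⟩ v hvB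
      · intro i h1 h2; omega
      · exact (hPx ⟨0, h0⟩).2
    | succ m hm ih =>
      intro hmn
      obtain ⟨W, hWE, hWsupp, hWcnt, hWx2, hWx1⟩ := ih (le_of_lt hmn)
      set Pm := P ⟨m, hmn⟩ with hPm
      -- x m is in the support of W
      have hxmW : x m ∈ W.support := by
        have : 0 < W.support.tail.count (x m) := by omega
        exact List.mem_of_mem_tail (List.count_pos_iff.mp this)
      set q1 := W.takeUntil (x m) hxmW with hq1
      set q2 := W.dropUntil (x m) hxmW with hq2
      have hspec : q1.append q2 = W := W.take_spec hxmW
      have hcnt : ∀ v : V, (q1.append (Pm.append q2)).support.tail.count v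
          = W.support.tail.count v + Pm.support.tail.count v := by
        intro v
        rw [Walk.tail_support_append, Walk.tail_support_append, ← hspec,
          Walk.tail_support_append]
        simp [List.count_append]
        ring
      have hmemW : ∀ v : V, v ∈ (q1.append (Pm.append q2)).support →
          v ∈ W.support ∨ v ∈ Pm.support := by
        intro v hv
        rw [Walk.mem_support_append_iff, Walk.mem_support_append_iff] at hv
        rcases hv with h | h | h
        · exact Or.inl (W.support_takeUntil_subset hxmW h)
        · exact Or.inr h
        · exact Or.inl (W.support_dropUntil_subset hxmW h)
      -- Pm support inside B m
      have hPmB : ∀ v : V, v ∈ Pm.support → v ∈ B m := fun v hv => hPsupp ⟨m, hmn⟩ hv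
      -- a vertex of some B i, i < m, not equal to x m, is not in Pm's support
      have hnotPm : ∀ v : V, (∃ i < m, v ∈ B i) → v ≠ x m → v ∉ Pm.support := by
        rintro v ⟨i, him, hvB⟩ hne hv
        exact hne (hsep i m him hmn v hvB (hPmB v hv))
      -- a vertex of B m, not equal to x m, is not in W's support
      have hnotW : ∀ v : V, v ∈ B m → v ≠ x m → v ∉ W.support := by
        intro v hvB hne hv
        obtain ⟨i, him, hvBi⟩ := hWsupp v hv
        exact hne (hsep i m him hmn v hvBi hvB)
      have hcnt0W : ∀ v : V, v ∉ W.support → W.support.tail.count v = 0 := by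
        intro v hv
        exact List.count_eq_zero.mpr (fun h => hv (List.mem_of_mem_tail h))
      have hcnt0P : ∀ v : V, v ∉ Pm.support → Pm.support.tail.count v = 0 := by
        intro v hv
        exact List.count_eq_zero.mpr (fun h => hv (List.mem_of_mem_tail h))
      refine ⟨q1.append (Pm.append q2), ?_, ?_, ?_, ?_, ?_⟩
      · -- edges
        rw [Finset.sum_range_succ, ← hWE]
        have hmn' : m < n := hmn
        have : E m = (Pm.edges : Multiset (Sym2 V)) := by simp [hE, hmn', hPm]
        rw [this]
        have he : (q1.append (Pm.append q2)).edges
            = q1.edges ++ (Pm.edges ++ q2.edges) := by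
          rw [Walk.edges_append, Walk.edges_append]
        have he' : W.edges = q1.edges ++ q2.edges := by
          rw [← hspec, Walk.edges_append]
        rw [he, he']
        push_cast [← Multiset.coe_add]
        abel
      · -- support containment
        intro v hv
        rcases hmemW v hv with h | h
        · obtain ⟨i, him, h⟩ := hWsupp v h
          exact ⟨i, Nat.lt_succ_of_lt him, h⟩
        · exact ⟨m, Nat.lt_succ_self m, hPmB v h⟩
      · -- counts between 1 and 2
        rintro v ⟨i, him, hvB⟩
        rw [hcnt v]
        by_cases hvx : v = x m
        · subst hvx
          rw [hWx1, (hPx ⟨m, hmn⟩).1]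
          omega
        · rcases Nat.lt_or_ge i m with hi | hi
          · have h0 : Pm.support.tail.count v = 0 :=
              hcnt0P v (hnotPm v ⟨i, hi, hvB⟩ hvx)
            have := hWcnt v ⟨i, hi, hvB⟩
            omega
          · have heq : i = m := by omega
            have hvB' : v ∈ B m := heq ▸ hvB
            have h0 : W.support.tail.count v = 0 := hcnt0W v (hnotW v hvB' hvx)
            have h2 := hPall ⟨m, hmn⟩ v hvB'
            rw [← hPm] at h2
            omega
      · -- x i counted twice
        intro i h1 hi
        rw [hcnt (x i)]
        rcases Nat.lt_or_ge i m with him | him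
        · have hxiB : x i ∈ B i := (hxB ⟨i, by omega⟩).1
          have hne : x i ≠ x m := fun h => by
            have := hxinj i m (by omega) (by omega) h; omega
          have h0 : Pm.support.tail.count (x i) = 0 :=
            hcnt0P (x i) (hnotPm (x i) ⟨i, him, hxiB⟩ hne)
          have := hWx2 i h1 him
          omega
        · have him' : i = m := by omega
          rw [him', hWx1, (hPx ⟨m, hmn⟩).1]
      · -- x (m+1) counted once
        rw [hcnt (x (m + 1))]
        have hxB' : x (m + 1) ∈ B m := (hxB ⟨m, hmn⟩).2
        have hne : x (m + 1) ≠ x m := fun h => by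
          have := hxinj (m + 1) m (by omega) (by omega) h; omega
        have h0 : W.support.tail.count (x (m + 1)) = 0 :=
          hcnt0W _ (hnotW _ hxB' hne)
        rw [h0, (hPx ⟨m, hmn⟩).2]
  obtain ⟨W, hWE, hWsupp, hWcnt, hWx2, _⟩ := key n hn le_rfl
  refine ⟨W, ?_, ?_, hWx2⟩
  · rw [hWE, ← Fin.sum_univ_eq_sum_range]
    apply Finset.sum_congr rfl
    intro i _
    simp [hE, i.isLt]
  · intro v hv
    apply hWcnt
    simp only [Set.mem_iUnion, Finset.mem_range, exists_prop] at hv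
    exact hv
end
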